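/- In a category satisfying (J1)-(J4), consider morphisms f : A → B, g : C → B, f' : A' → B', g' : C' → B' and b : B → B' such that b∘f admits a weak lifting along f' via a weak equivalence x : A → X_{f'}, and b∘g admits a weak lifting along g' via a weak equivalence y : C → X_{g'}. Let j : A *_B C → B and j' : A' *_{B'} C' → B' be the join morphisms. Then b∘j admits a weak lifting along j'. Moreover, if b, x, and y are weak equivalences, then A *_B C and A' *_{B'} C' are weakly equivalent. -/

import Mathlib

/-!
Since every object is a cofibrant model, the F-factorizations `E` of `g` and `E₂` of `g'` can
be compared over `b` by a map `e : E ⟶ E₂`, a weak equivalence as soon as `y` is. The pullbacks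
`E'` and `E₂'` then both map to `F = E₂ ×_{B'} X_{f'}`, and the joins `J₁`, `J₂` both map to a
single model `K` of the homotopy pushout of `X_{f'} ← F → E₂`; `j'` factors as a weak
equivalence `J₂ ⟶ K` followed by a map `K ⟶ B'` through which `j ≫ b` factors. When `b`, `x`
and `y` are weak equivalences, the gluing lemmas for pullbacks of fibrations and for pushouts
along cofibrations make `J₁ ⟶ K` a weak equivalence as well.
-/

open CategoryTheory CategoryTheory.Limits ZeroObject

universe v u v' u'

variable (C : Type u) [Category.{v} C] [HasZeroObject C] [HasZeroMorphisms C]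

/-- A category satisfying axioms (J1)-(J4) of Doeraene's J-categories:
a pointed category with fibrations, cofibrations and weak equivalences. -/
structure PreJCat where
  fib : MorphismProperty C
  cofib : MorphismProperty C
  weq : MorphismProperty C
  /-- (J1) isomorphisms are trivial cofibrations -/
  iso_triv_cofib : ∀ {X Y : C} (f : X ⟶ Y), IsIso f → cofib f ∧ weq f
  /-- (J1) isomorphisms are trivial fibrations -/
  iso_triv_fib : ∀ {X Y : C} (f : X ⟶ Y), IsIso f → fib f ∧ weq f
  fib_comp : ∀ {X Y Z : C} {f : X ⟶ Y} {g : Y ⟶ Z}, fib f → fib g → fib (f ≫ g)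
  cofib_comp : ∀ {X Y Z : C} {f : X ⟶ Y} {g : Y ⟶ Z}, cofib f → cofib g → cofib (f ≫ g)
  /-- (J1) two-out-of-three for weak equivalences -/
  weq_comp : ∀ {X Y Z : C} {f : X ⟶ Y} {g : Y ⟶ Z}, weq f → weq g → weq (f ≫ g)
  weq_of_comp_left : ∀ {X Y Z : C} {f : X ⟶ Y} {g : Y ⟶ Z}, weq g → weq (f ≫ g) → weq f
  weq_of_comp_right : ∀ {X Y Z : C} {f : X ⟶ Y} {g : Y ⟶ Z}, weq f → weq (f ≫ g) → weq g
  /-- (J2) pullbacks of fibrations exist, and the base extension is a fibration -/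
  pb_exists : ∀ {E B B' : C} (p : E ⟶ B) (f : B' ⟶ B), fib p →
    ∃ (P : C) (fb : P ⟶ E) (pb : P ⟶ B'), IsPullback fb pb p f ∧ fib pb
  /-- (J2) base extensions of weak equivalences along fibrations are weak equivalences -/
  pb_weq : ∀ {E B B' P : C} {p : E ⟶ B} {f : B' ⟶ B} {fb : P ⟶ E} {pb : P ⟶ B'},
    fib p → IsPullback fb pb p f → (weq f → weq fb) ∧ (weq p → weq pb)
  /-- (J2) dual: pushouts of cofibrations exist -/
  po_exists : ∀ {A X Y : C} (i : A ⟶ X) (g : A ⟶ Y), cofib i →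
    ∃ (Q : C) (inl : X ⟶ Q) (inr : Y ⟶ Q), IsPushout i g inl inr ∧ cofib inr
  po_weq : ∀ {A X Y Q : C} {i : A ⟶ X} {g : A ⟶ Y} {inl : X ⟶ Q} {inr : Y ⟶ Q},
    cofib i → IsPushout i g inl inr → (weq g → weq inl) ∧ (weq i → weq inr)
  /-- (J3) F-factorizations exist -/
  F_fac : ∀ {X Y : C} (f : X ⟶ Y), ∃ (Z : C) (τ : X ⟶ Z) (q : Z ⟶ Y),
    weq τ ∧ fib q ∧ τ ≫ q = f
  /-- (J3) C-factorizations exist -/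
  C_fac : ∀ {X Y : C} (f : X ⟶ Y), ∃ (Z : C) (i : X ⟶ Z) (σ : Z ⟶ Y),
    cofib i ∧ weq σ ∧ i ≫ σ = f
  /-- (J4) cofibrant replacements exist -/
  cof_replace : ∀ X : C, ∃ (Xb : C) (q : Xb ⟶ X), fib q ∧ weq q ∧
    (∀ {E : C} (p : E ⟶ Xb), fib p → weq p → ∃ s : Xb ⟶ E, s ≫ p = 𝟙 Xb)

variable {C}

namespace PreJCat

/-- An object is a cofibrant model if every trivial fibration onto it admits a section. -/
def CofModel (P : PreJCat C) (X : C) : Prop :=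
  ∀ {E : C} (p : E ⟶ X), P.fib p → P.weq p → ∃ s : X ⟶ E, s ≫ p = 𝟙 X

/-- An object is e-fibrant if the morphism to the zero object is a fibration. -/
def EFibrant (P : PreJCat C) (X : C) : Prop := P.fib (0 : X ⟶ 0)

/-- `f` admits a weak lifting along `g` (all objects being cofibrant models). -/
def WeakLifting (P : PreJCat C) {A B Cc : C} (f : A ⟶ B) (g : Cc ⟶ B) : Prop :=
  ∃ (E : C) (τ : Cc ⟶ E) (q : E ⟶ B), P.weq τ ∧ P.fib q ∧ τ ≫ q = g ∧
    ∃ s : A ⟶ E, s ≫ q = f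

/-- `g` admits a weak section. -/
def HasWeakSection (P : PreJCat C) {E B : C} (g : E ⟶ B) : Prop :=
  P.WeakLifting (𝟙 B) g

/-- `j : J ⟶ B` is a join morphism of `f : A ⟶ B` and `g : Cc ⟶ B`: built from an
F-factorization of `g`, a pullback, a C-factorization and a pushout. -/
def IsJoin (P : PreJCat C) {A Cc B J : C} (f : A ⟶ B) (g : Cc ⟶ B) (j : J ⟶ B) : Prop :=
  ∃ (E : C) (τ : Cc ⟶ E) (q : E ⟶ B), P.weq τ ∧ P.fib q ∧ τ ≫ q = g ∧
  ∃ (E' Z : C) (fbar : E' ⟶ E) (pbar : E' ⟶ A) (i : E' ⟶ Z) (σ : Z ⟶ E)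
    (a : A ⟶ J) (bz : Z ⟶ J),
    IsPullback fbar pbar q f ∧ P.cofib i ∧ P.weq σ ∧ i ≫ σ = fbar ∧
    IsPushout pbar i a bz ∧ a ≫ j = f ∧ bz ≫ j = σ ≫ q

/-- `IsIterJoin P p n h` : `h` is an `n`-th iterated join morphism `*ⁿ_B E ⟶ B` of `p`. -/
inductive IsIterJoin (P : PreJCat C) {E B : C} (p : E ⟶ B) : ℕ → ∀ {X : C}, (X ⟶ B) → Prop
  | zero : IsIterJoin P p 0 p
  | succ {n : ℕ} {X Y : C} {h : X ⟶ B} {h' : Y ⟶ B} :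
      IsIterJoin P p n h → P.IsJoin h p h' → IsIterJoin P p (n + 1) h'

/-- The Ganea-type sectional category of a morphism. -/
noncomputable def Gsecat (P : PreJCat C) {E B : C} (p : E ⟶ B) : ℕ∞ :=
  sInf {n : ℕ∞ | ∃ m : ℕ, n = (m : ℕ∞) ∧
    ∃ (X : C) (h : X ⟶ B), P.IsIterJoin p m h ∧ P.HasWeakSection h}

end PreJCat

/-- `p1, p2` exhibit `Pd` as a binary product of `X` and `Y`. -/
def IsBinProd {X Y Pd : C} (p1 : Pd ⟶ X) (p2 : Pd ⟶ Y) : Prop :=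
  Nonempty (IsLimit (BinaryFan.mk p1 p2))

namespace PreJCat

/-- `IsFatWedge P p n j Δ` : `j : Tⁿ(p) ⟶ B^{n+1}` is an `n`-th fat wedge morphism of `p`
together with the diagonal `Δ : B ⟶ B^{n+1}`. -/
inductive IsFatWedge (P : PreJCat C) {E B : C} (p : E ⟶ B) :
    ℕ → ∀ {T Pw : C}, (T ⟶ Pw) → (B ⟶ Pw) → Prop
  | zero : IsFatWedge P p 0 p (𝟙 B)
  | succ {n : ℕ} {T Pn : C} {j : T ⟶ Pn} {Δ : B ⟶ Pn}
      (hprev : IsFatWedge P p n j Δ)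
      {Pn1 : C} {pr1 : Pn1 ⟶ Pn} {pr2 : Pn1 ⟶ B} (hP : IsBinProd pr1 pr2)
      {TB : C} {q1 : TB ⟶ T} {q2 : TB ⟶ B} (hTB : IsBinProd q1 q2)
      {PE : C} {r1 : PE ⟶ Pn} {r2 : PE ⟶ E} (hPE : IsBinProd r1 r2)
      {jB : TB ⟶ Pn1} (hjB : jB ≫ pr1 = q1 ≫ j ∧ jB ≫ pr2 = q2)
      {pP : PE ⟶ Pn1} (hpP : pP ≫ pr1 = r1 ∧ pP ≫ pr2 = r2 ≫ p)
      {Tn1 : C} {j' : Tn1 ⟶ Pn1} (hjoin : P.IsJoin jB pP j')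
      {Δ' : B ⟶ Pn1} (hΔ : Δ' ≫ pr1 = Δ ∧ Δ' ≫ pr2 = 𝟙 B) :
      IsFatWedge P p (n + 1) j' Δ'

/-- The Whitehead-type sectional category of a morphism with e-fibrant codomain. -/
noncomputable def WsecatE (P : PreJCat C) {E B : C} (p : E ⟶ B) : ℕ∞ :=
  sInf {n : ℕ∞ | ∃ m : ℕ, n = (m : ℕ∞) ∧
    ∃ (T Pw : C) (j : T ⟶ Pw) (Δ : B ⟶ Pw), P.IsFatWedge p m j Δ ∧ P.WeakLifting Δ j}

/-- The Whitehead-type sectional category of an arbitrary morphism, via e-fibrant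
replacements of the codomain. -/
noncomputable def Wsecat (P : PreJCat C) {E B : C} (p : E ⟶ B) : ℕ∞ :=
  ⨅ (F : C) (τ : B ⟶ F) (_ : P.weq τ ∧ P.EFibrant F), P.WsecatE (p ≫ τ)

/-- A commutative square is a homotopy pullback. -/
def IsHPB (P : PreJCat C) {D A Cc B : C} (f' : D ⟶ Cc) (g' : D ⟶ A)
    (g : Cc ⟶ B) (f : A ⟶ B) : Prop :=
  f' ≫ g = g' ≫ f ∧ ∃ (E : C) (τ : Cc ⟶ E) (q : E ⟶ B), P.weq τ ∧ P.fib q ∧ τ ≫ q = g ∧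
    ∃ (Pt : C) (pr1 : Pt ⟶ E) (pr2 : Pt ⟶ A), IsPullback pr1 pr2 q f ∧
      ∃ w : D ⟶ Pt, P.weq w ∧ w ≫ pr1 = f' ≫ τ ∧ w ≫ pr2 = g'

/-- A commutative square is a homotopy pushout. -/
def IsHPO (P : PreJCat C) {A B Cc D : C} (f : A ⟶ B) (g : A ⟶ Cc)
    (i' : B ⟶ D) (j' : Cc ⟶ D) : Prop :=
  f ≫ i' = g ≫ j' ∧ ∃ (Z : C) (i : A ⟶ Z) (σ : Z ⟶ B), P.cofib i ∧ P.weq σ ∧ i ≫ σ = f ∧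
    ∃ (Q : C) (inl : Z ⟶ Q) (inr : Cc ⟶ Q), IsPushout i g inl inr ∧
      ∃ w : Q ⟶ D, P.weq w ∧ inl ≫ w = σ ≫ i' ∧ inr ≫ w = j'

/-- `A-A'-B'-B` is a weak pullback over `b : B ⟶ B'` (all objects cofibrant models). -/
def IsWeakPullback (P : PreJCat C) {A B A' B' : C}
    (f : A ⟶ B) (f' : A' ⟶ B') (b : B ⟶ B') : Prop :=
  ∃ (X : C) (τ : A' ⟶ X) (q : X ⟶ B'), P.weq τ ∧ P.fib q ∧ τ ≫ q = f' ∧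
    ∃ x : A ⟶ X, P.IsHPB x f q b

/-- `g : G ⟶ B` is an `n`-th Ganea map of `B`: the `n`-th iterated join of `0 ⟶ B`. -/
def IsGaneaMap (P : PreJCat C) (B : C) (n : ℕ) {G : C} (g : G ⟶ B) : Prop :=
  P.IsIterJoin (0 : (0 : C) ⟶ B) n g

/-- The Lusternik-Schnirelmann category of an object. -/
noncomputable def catObj (P : PreJCat C) (B : C) : ℕ∞ :=
  sInf {n : ℕ∞ | ∃ m : ℕ, n = (m : ℕ∞) ∧
    ∃ (G : C) (g : G ⟶ B), P.IsGaneaMap B m g ∧ P.HasWeakSection g}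

/-- The Lusternik-Schnirelmann category of a morphism `b : B ⟶ B'`:
least `n` such that `b` admits a weak lifting along the `n`-th Ganea map of `B'`. -/
noncomputable def catMor (P : PreJCat C) {B B' : C} (b : B ⟶ B') : ℕ∞ :=
  sInf {n : ℕ∞ | ∃ m : ℕ, n = (m : ℕ∞) ∧
    ∃ (G : C) (g : G ⟶ B'), P.IsGaneaMap B' m g ∧ P.WeakLifting b g}

/-- One step of a zigzag: a weak equivalence of morphisms in the arrow category. -/
def MorWeqStep (P : PreJCat C) (u v : Arrow C) : Prop :=
  ∃ h : u ⟶ v, P.weq h.left ∧ P.weq h.right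

/-- Two morphisms are weakly equivalent: joined by a finite zigzag of weak
equivalences of morphisms. -/
def WeaklyEquivMor (P : PreJCat C) (u v : Arrow C) : Prop :=
  Relation.EqvGen P.MorWeqStep u v

def ObjWeqStep (P : PreJCat C) (X Y : C) : Prop := ∃ f : X ⟶ Y, P.weq f

/-- Two objects are weakly equivalent: joined by a finite zigzag of weak equivalences. -/
def WeaklyEquivObj (P : PreJCat C) (X Y : C) : Prop :=
  Relation.EqvGen P.ObjWeqStep X Y

/-- The abstract topological complexity of an e-fibrant object:
the sectional category of the diagonal `B ⟶ B × B`. -/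
noncomputable def TCE (P : PreJCat C) (B : C) : ℕ∞ :=
  ⨅ (Pd : C) (p1 : Pd ⟶ B) (p2 : Pd ⟶ B) (_ : IsBinProd p1 p2)
    (Δ : B ⟶ Pd) (_ : Δ ≫ p1 = 𝟙 B ∧ Δ ≫ p2 = 𝟙 B), P.Gsecat Δ

/-- The abstract topological complexity of an arbitrary object, via e-fibrant
replacements. -/
noncomputable def TC (P : PreJCat C) (B : C) : ℕ∞ :=
  ⨅ (F : C) (τ : B ⟶ F) (_ : P.weq τ ∧ P.EFibrant F), P.TCE F

end PreJCat

variable (C)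

/-- A J-category: (J1)-(J4) together with the cube axiom (J5). -/
structure JCat extends PreJCat C where
  /-- (J5) the cube axiom: in a commutative cube whose bottom face is a homotopy
  pushout and whose vertical faces are homotopy pullbacks, the top face is a
  homotopy pushout. -/
  cube : ∀ {X00 X01 X10 X11 Y00 Y01 Y10 Y11 : C}
    {tf : X00 ⟶ X01} {tg : X00 ⟶ X10} {ti : X01 ⟶ X11} {tj : X10 ⟶ X11}
    {bf : Y00 ⟶ Y01} {bg : Y00 ⟶ Y10} {bi : Y01 ⟶ Y11} {bj : Y10 ⟶ Y11}
    {v00 : X00 ⟶ Y00} {v01 : X01 ⟶ Y01} {v10 : X10 ⟶ Y10} {v11 : X11 ⟶ Y11},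
    tf ≫ ti = tg ≫ tj →
    toPreJCat.IsHPO bf bg bi bj →
    toPreJCat.IsHPB tf v00 v01 bf →
    toPreJCat.IsHPB tg v00 v10 bg →
    toPreJCat.IsHPB ti v01 v11 bi →
    toPreJCat.IsHPB tj v10 v11 bj →
    toPreJCat.IsHPO tf tg ti tj

variable {C}

/-- A modelization functor: preserves weak equivalences, homotopy pullbacks and
homotopy pushouts. -/
structure ModelizationFunctor {D : Type u'} [Category.{v'} D] [HasZeroObject D]
    [HasZeroMorphisms D] (P : PreJCat C) (Q : PreJCat D) where
  F : C ⥤ D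
  map_weq : ∀ {X Y : C} (f : X ⟶ Y), P.weq f → Q.weq (F.map f)
  map_hpb : ∀ {Dd A Cc B : C} {f' : Dd ⟶ Cc} {g' : Dd ⟶ A} {g : Cc ⟶ B} {f : A ⟶ B},
    P.IsHPB f' g' g f → Q.IsHPB (F.map f') (F.map g') (F.map g) (F.map f)
  map_hpo : ∀ {A B Cc Dd : C} {f : A ⟶ B} {g : A ⟶ Cc} {i' : B ⟶ Dd} {j' : Cc ⟶ Dd},
    P.IsHPO f g i' j' → Q.IsHPO (F.map f) (F.map g) (F.map i') (F.map j')

namespace PreJCat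

variable {𝒞 : Type*} [Category 𝒞] (P : PreJCat 𝒞)

lemma weq_id (X : 𝒞) : P.weq (𝟙 X) :=
  (P.iso_triv_fib _ inferInstance).2

lemma weq_of_comp_eq_id {X Y : 𝒞} {s : X ⟶ Y} {ρ : Y ⟶ X} (hρ : P.weq ρ) (h : s ≫ ρ = 𝟙 X) :
    P.weq s :=
  P.weq_of_comp_left hρ (h ▸ P.weq_id X)

lemma fib_of_isPullback {Q X Y Z : 𝒞} {fst : Q ⟶ X} {snd : Q ⟶ Y} {p : X ⟶ Z} {f : Y ⟶ Z}
    (sq : IsPullback fst snd p f) (hp : P.fib p) : P.fib snd := by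
  obtain ⟨Q', fst', snd', sq', hsnd'⟩ := P.pb_exists p f hp
  rw [← sq.isoIsPullback_hom_snd _ _ sq']
  exact P.fib_comp (P.iso_triv_fib _ inferInstance).1 hsnd'

lemma cofib_of_isPushout {A X Y Q : 𝒞} {f : A ⟶ X} {g : A ⟶ Y} {inl : X ⟶ Q} {inr : Y ⟶ Q}
    (sq : IsPushout f g inl inr) (hf : P.cofib f) : P.cofib inr := by
  obtain ⟨Q', inl', inr', sq', hinr'⟩ := P.po_exists f g hf
  rw [← sq'.inr_isoIsPushout_hom _ _ sq]
  exact P.cofib_comp hinr' (P.iso_triv_cofib _ inferInstance).1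

lemma exists_fib_span {X E R Y : 𝒞} {τ : X ⟶ E} {c : X ⟶ R} {q : E ⟶ Y} {p : R ⟶ Y}
    (hp : P.fib p) (h : τ ≫ q = c ≫ p) :
    ∃ (D : 𝒞) (w : X ⟶ D) (ρE : D ⟶ E) (ρR : D ⟶ R), P.weq w ∧ P.fib ρE ∧
      (P.fib q → P.fib ρR) ∧ w ≫ ρE = τ ∧ w ≫ ρR = c ∧ ρE ≫ q = ρR ≫ p := by
  obtain ⟨D₀, dR, dE, hD₀, hdE⟩ := P.pb_exists p q hp
  obtain ⟨D, w, r, hw, hr, hwr⟩ := P.F_fac (hD₀.lift c τ h.symm)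
  refine ⟨D, w, r ≫ dE, r ≫ dR, hw, P.fib_comp hr hdE,
    fun hq => P.fib_comp hr (P.fib_of_isPullback hD₀.flip hq), ?_, ?_, ?_⟩
  · rw [← Category.assoc, hwr, hD₀.lift_snd]
  · rw [← Category.assoc, hwr, hD₀.lift_fst]
  · rw [Category.assoc, Category.assoc, hD₀.w]

lemma exists_lift_of_square {X E R Y : 𝒞} (hE : P.CofModel E) {τ : X ⟶ E} {c : X ⟶ R}
    {q : E ⟶ Y} {p : R ⟶ Y} (hτ : P.weq τ) (hp : P.fib p) (h : τ ≫ q = c ≫ p) :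
    ∃ e : E ⟶ R, e ≫ p = q ∧ (P.weq c → P.weq e) := by
  obtain ⟨D, w, ρE, ρR, hw, hρE, -, hwE, hwR, hρ⟩ := P.exists_fib_span hp h
  have hρEw : P.weq ρE := P.weq_of_comp_right hw (hwE ▸ hτ)
  obtain ⟨s, hs⟩ := hE ρE hρE hρEw
  refine ⟨s ≫ ρR, by rw [Category.assoc, ← hρ, ← Category.assoc, hs, Category.id_comp],
    fun hcw => P.weq_comp (P.weq_of_comp_eq_id hρEw hs) (P.weq_of_comp_right hw (hwR ▸ hcw))⟩

lemma weq_of_isPullback_of_trivFib {E₁ E₂ B A P₁ P₂ : 𝒞} {p₁ : E₁ ⟶ B} {p₂ : E₂ ⟶ B}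
    {f : A ⟶ B} {f₁ : P₁ ⟶ E₁} {g₁ : P₁ ⟶ A} {f₂ : P₂ ⟶ E₂} {g₂ : P₂ ⟶ A}
    (h₁ : IsPullback f₁ g₁ p₁ f) (h₂ : IsPullback f₂ g₂ p₂ f)
    {ρ : E₁ ⟶ E₂} (hρ : P.fib ρ) (hρw : P.weq ρ) (hρp : ρ ≫ p₂ = p₁)
    {u : P₁ ⟶ P₂} (hu₁ : u ≫ f₂ = f₁ ≫ ρ) (hu₂ : u ≫ g₂ = g₁) : P.weq u := by
  have h : IsPullback f₁ (u ≫ g₂) (ρ ≫ p₂) f := by rwa [hu₂, hρp]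
  exact (P.pb_weq hρ (h.of_bot hu₁.symm h₂)).2 hρw

lemma weq_of_isPullback_over {E₁ E₂ B A P₁ P₂ : 𝒞} {p₁ : E₁ ⟶ B} {p₂ : E₂ ⟶ B}
    {f : A ⟶ B} {f₁ : P₁ ⟶ E₁} {g₁ : P₁ ⟶ A} {f₂ : P₂ ⟶ E₂} {g₂ : P₂ ⟶ A}
    (h₁ : IsPullback f₁ g₁ p₁ f) (h₂ : IsPullback f₂ g₂ p₂ f) (hp₁ : P.fib p₁) (hp₂ : P.fib p₂)
    {e : E₁ ⟶ E₂} (hew : P.weq e) (hep : e ≫ p₂ = p₁)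
    {u : P₁ ⟶ P₂} (hu₁ : u ≫ f₂ = f₁ ≫ e) (hu₂ : u ≫ g₂ = g₁) : P.weq u := by
  -- Brown's factorization: `e = w ≫ ρ₂` with `w` a section of the trivial fibration `ρ₁`.
  obtain ⟨D, w, ρ₁, ρ₂, hw, hρ₁, hρ₂, hwρ₁, hwρ₂, hρ⟩ :=
    P.exists_fib_span hp₂ (show 𝟙 E₁ ≫ p₁ = e ≫ p₂ by rw [Category.id_comp, hep])
  have hρ₁w : P.weq ρ₁ := P.weq_of_comp_right hw (hwρ₁ ▸ P.weq_id E₁)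
  have hρ₂w : P.weq ρ₂ := P.weq_of_comp_right hw (hwρ₂ ▸ hew)
  obtain ⟨Q, k, g, hQ, -⟩ := P.pb_exists (ρ₁ ≫ p₁) f (P.fib_comp hρ₁ hp₁)
  let s : P₁ ⟶ Q := hQ.lift (f₁ ≫ w) g₁ (by rw [Category.assoc, reassoc_of% hwρ₁, h₁.w])
  let r₁ : Q ⟶ P₁ := h₁.lift (k ≫ ρ₁) g (by rw [Category.assoc, hQ.w])
  let r₂ : Q ⟶ P₂ := h₂.lift (k ≫ ρ₂) g (by rw [Category.assoc, ← hρ, hQ.w])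
  have hr₁ : P.weq r₁ := P.weq_of_isPullback_of_trivFib hQ h₁ hρ₁ hρ₁w rfl
    (h₁.lift_fst _ _ _) (h₁.lift_snd _ _ _)
  have hr₂ : P.weq r₂ := P.weq_of_isPullback_of_trivFib hQ h₂ (hρ₂ hp₁) hρ₂w hρ.symm
    (h₂.lift_fst _ _ _) (h₂.lift_snd _ _ _)
  have hsr₁ : s ≫ r₁ = 𝟙 P₁ := h₁.hom_ext (by simp [s, r₁, hwρ₁]) (by simp [s, r₁])
  have hu : u = s ≫ r₂ := h₂.hom_ext (by simp [s, r₂, hu₁, hwρ₂]) (by simp [s, r₂, hu₂])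
  exact hu ▸ P.weq_comp (P.weq_of_comp_eq_id hr₁ hsr₁) hr₂

lemma weq_gluing_of_isPullback {E B A E₂ B' X E' F : 𝒞}
    {q : E ⟶ B} {f : A ⟶ B} {fbar : E' ⟶ E} {pbar : E' ⟶ A} (hE' : IsPullback fbar pbar q f)
    {q₂ : E₂ ⟶ B'} {qX : X ⟶ B'} {wE : F ⟶ E₂} {wX : F ⟶ X} (hF : IsPullback wE wX q₂ qX)
    (hq : P.fib q) (hq₂ : P.fib q₂) {e : E ⟶ E₂} {b : B ⟶ B'} {x : A ⟶ X}
    (he : e ≫ q₂ = q ≫ b) (hx : x ≫ qX = f ≫ b) (hew : P.weq e) (hbw : P.weq b)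
    (hxw : P.weq x) {n : E' ⟶ F} (hnE : n ≫ wE = fbar ≫ e) (hnX : n ≫ wX = pbar ≫ x) :
    P.weq n := by
  obtain ⟨EB, eB, pB, hEB, hpB⟩ := P.pb_exists q₂ b hq₂
  obtain ⟨G, gB, gA, hG, -⟩ := P.pb_exists pB f hpB
  let e₀ : E ⟶ EB := hEB.lift e q he
  have he₀ : P.weq e₀ :=
    P.weq_of_comp_left ((P.pb_weq hq₂ hEB).1 hbw) (by rw [hEB.lift_fst]; exact hew)
  let u : E' ⟶ G := hG.lift (fbar ≫ e₀) pbar (by rw [Category.assoc, hEB.lift_snd, hE'.w])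
  have hu : P.weq u := P.weq_of_isPullback_over hE' hG hq hpB he₀ (hEB.lift_snd _ _ _)
    (hG.lift_fst _ _ _) (hG.lift_snd _ _ _)
  have hGF : IsPullback (gB ≫ eB) gA q₂ (x ≫ qX) := by rw [hx]; exact hG.paste_horiz hEB
  let v : G ⟶ F := hF.lift (gB ≫ eB) (gA ≫ x) (by rw [hGF.w, Category.assoc])
  have hv : P.weq v := (P.pb_weq (P.fib_of_isPullback hF hq₂) (hGF.of_right' hF)).1 hxw
  have hn : n = u ≫ v := hF.hom_ext (by simp [u, v, e₀, hnE]) (by simp [u, v, hnX])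
  exact hn ▸ P.weq_comp hu hv

lemma weq_gluing_of_isPushout {E' A Z J F X V W K : 𝒞}
    {pbar : E' ⟶ A} {i : E' ⟶ Z} {a : A ⟶ J} {bz : Z ⟶ J} (hJ : IsPushout pbar i a bz)
    (hi : P.cofib i) {n : E' ⟶ F} {zV : Z ⟶ V} {tV : F ⟶ V} (hV : IsPushout i n zV tV)
    {x : A ⟶ X} {wX : F ⟶ X} (hn : n ≫ wX = pbar ≫ x)
    {v : V ⟶ W} (hv : P.cofib v) {inW : W ⟶ K} {inX : X ⟶ K}
    (hK : IsPushout (tV ≫ v) wX inW inX)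
    {μ : J ⟶ K} (hμa : a ≫ μ = x ≫ inX) (hμb : bz ≫ μ = zV ≫ v ≫ inW)
    (hxw : P.weq x) (hvw : P.weq v) : P.weq μ := by
  have ha : P.cofib a := P.cofib_of_isPushout hJ.flip hi
  obtain ⟨L, lam, xL, hL, -⟩ := P.po_exists a x ha
  let l : L ⟶ K := hL.desc μ inX hμa
  have hZL : IsPushout i (n ≫ wX) (bz ≫ lam) xL := by rw [hn]; exact hJ.flip.paste_vert hL
  have hVL := hZL.of_top' hV
  have hKL : IsPushout (tV ≫ v) wX inW (xL ≫ l) := by rwa [hL.inr_desc]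
  have hvl : IsPushout v (hV.desc (bz ≫ lam) (wX ≫ xL) _) inW l :=
    hKL.of_left (hV.hom_ext (by simp [l, hμb]) (by simpa [l] using hK.w)) hVL
  rw [← hL.inl_desc μ inX hμa]
  exact P.weq_comp ((P.po_weq ha hL).1 hxw) ((P.po_weq hv hvl).2 hvw)

lemma exists_weq_to_pushout {E' A Z J F X V W K Y B : 𝒞}
    {pbar : E' ⟶ A} {i : E' ⟶ Z} {a : A ⟶ J} {bz : Z ⟶ J} (hJ : IsPushout pbar i a bz)
    (hi : P.cofib i) {n : E' ⟶ F} {zV : Z ⟶ V} {tV : F ⟶ V} (hV : IsPushout i n zV tV)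
    {x : A ⟶ X} {wX : F ⟶ X} (hn : n ≫ wX = pbar ≫ x)
    {v : V ⟶ W} (hv : P.cofib v) {inW : W ⟶ K} {inX : X ⟶ K}
    (hK : IsPushout (tV ≫ v) wX inW inX)
    {sY : W ⟶ Y} (hsY : P.weq sY) {h : Z ⟶ Y} (hh : zV ≫ v ≫ sY = h)
    {qX : X ⟶ B} {qY : Y ⟶ B} {ν : K ⟶ B} (hνW : inW ≫ ν = sY ≫ qY) (hνX : inX ≫ ν = qX)
    {j : J ⟶ B} (hja : a ≫ j = x ≫ qX) (hjb : bz ≫ j = h ≫ qY) :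
    ∃ μ : J ⟶ K, μ ≫ ν = j ∧ (P.weq x → P.weq n → P.weq h → P.weq μ) := by
  have hw : pbar ≫ x ≫ inX = i ≫ zV ≫ v ≫ inW := by
    rw [← reassoc_of% hn, ← hK.w, reassoc_of% hV.w, Category.assoc]
  refine ⟨hJ.desc (x ≫ inX) (zV ≫ v ≫ inW) hw, hJ.hom_ext ?_ ?_, fun hxw hnw hhw =>
    P.weq_gluing_of_isPushout hJ hi hV hn hv hK (hJ.inl_desc _ _ _) (hJ.inr_desc _ _ _) hxw ?_⟩
  · simp [hνX, hja]
  · simp [hνW, ← hh, hjb]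
  · have hzV : P.weq zV := (P.po_weq hi hV).1 hnw
    exact P.weq_of_comp_left hsY (P.weq_of_comp_right hzV (hh ▸ hhw))

lemma exists_common_weq_target {F X Y B : 𝒞} {wX : F ⟶ X} {wY : F ⟶ Y} {qX : X ⟶ B}
    {qY : Y ⟶ B} (hF : wY ≫ qY = wX ≫ qX)
    {E₁ A₁ Z₁ J₁ : 𝒞} {pbar₁ : E₁ ⟶ A₁} {i₁ : E₁ ⟶ Z₁} {a₁ : A₁ ⟶ J₁} {bz₁ : Z₁ ⟶ J₁}
    (hJ₁ : IsPushout pbar₁ i₁ a₁ bz₁) (hi₁ : P.cofib i₁)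
    {x₁ : A₁ ⟶ X} {n₁ : E₁ ⟶ F} {h₁ : Z₁ ⟶ Y}
    (hn₁ : n₁ ≫ wX = pbar₁ ≫ x₁) (hh₁ : i₁ ≫ h₁ = n₁ ≫ wY)
    {j₁ : J₁ ⟶ B} (hja₁ : a₁ ≫ j₁ = x₁ ≫ qX) (hjb₁ : bz₁ ≫ j₁ = h₁ ≫ qY)
    {E₂ A₂ Z₂ J₂ : 𝒞} {pbar₂ : E₂ ⟶ A₂} {i₂ : E₂ ⟶ Z₂} {a₂ : A₂ ⟶ J₂} {bz₂ : Z₂ ⟶ J₂}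
    (hJ₂ : IsPushout pbar₂ i₂ a₂ bz₂) (hi₂ : P.cofib i₂)
    {x₂ : A₂ ⟶ X} {n₂ : E₂ ⟶ F} {h₂ : Z₂ ⟶ Y}
    (hn₂ : n₂ ≫ wX = pbar₂ ≫ x₂) (hh₂ : i₂ ≫ h₂ = n₂ ≫ wY)
    {j₂ : J₂ ⟶ B} (hja₂ : a₂ ≫ j₂ = x₂ ≫ qX) (hjb₂ : bz₂ ≫ j₂ = h₂ ≫ qY) :
    ∃ (K : 𝒞) (ν : K ⟶ B) (μ₁ : J₁ ⟶ K) (μ₂ : J₂ ⟶ K), μ₁ ≫ ν = j₁ ∧ μ₂ ≫ ν = j₂ ∧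
      (P.weq x₁ → P.weq n₁ → P.weq h₁ → P.weq μ₁) ∧
      (P.weq x₂ → P.weq n₂ → P.weq h₂ → P.weq μ₂) := by
  obtain ⟨V₁, zV₁, tV₁, hV₁, htV₁⟩ := P.po_exists i₁ n₁ hi₁
  obtain ⟨V₂, zV₂, tV₂, hV₂, htV₂⟩ := P.po_exists i₂ n₂ hi₂
  obtain ⟨V, r₁, r₂, hV, hr₂⟩ := P.po_exists tV₁ tV₂ htV₁
  have hr₁ : P.cofib r₁ := P.cofib_of_isPushout hV.flip htV₂
  -- `W ≃ Y` receives `V₁` and `V₂` by cofibrations, so `K = X ⊔_F W` serves both joins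
  obtain ⟨W, c, sY, hc, hsY, hcs⟩ :=
    P.C_fac (hV.desc (hV₁.desc h₁ wY hh₁) (hV₂.desc h₂ wY hh₂) (by simp))
  obtain ⟨K, inW, inX, hK, -⟩ :=
    P.po_exists (tV₁ ≫ r₁ ≫ c) wX (P.cofib_comp htV₁ (P.cofib_comp hr₁ hc))
  have hK₂ : IsPushout (tV₂ ≫ r₂ ≫ c) wX inW inX := by rwa [← reassoc_of% hV.w]
  let ν : K ⟶ B := hK.desc (sY ≫ qY) qX (by simp [reassoc_of% hcs, hF])
  obtain ⟨μ₁, hμ₁, hμ₁w⟩ := P.exists_weq_to_pushout hJ₁ hi₁ hV₁ hn₁ (P.cofib_comp hr₁ hc) hK hsY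
    (by simp [hcs]) (hK.inl_desc _ _ _) (hK.inr_desc _ _ _) hja₁ hjb₁
  obtain ⟨μ₂, hμ₂, hμ₂w⟩ := P.exists_weq_to_pushout hJ₂ hi₂ hV₂ hn₂
    (P.cofib_comp hr₂ hc) hK₂ hsY
    (by simp [hcs]) (hK.inl_desc _ _ _) (hK.inr_desc _ _ _) hja₂ hjb₂
  exact ⟨K, ν, μ₁, μ₂, hμ₁, hμ₂, hμ₁w, hμ₂w⟩

lemma weakLifting_of_factor {A B J K : 𝒞} {μ : J ⟶ K} {ν : K ⟶ B} {j : J ⟶ B} {s : A ⟶ K}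
    {u : A ⟶ B} (hμ : P.weq μ) (hj : μ ≫ ν = j) (hs : s ≫ ν = u) : P.WeakLifting u j := by
  obtain ⟨E, w, q, hw, hq, hwq⟩ := P.F_fac ν
  exact ⟨E, μ ≫ w, q, P.weq_comp hμ hw, hq, by rw [Category.assoc, hwq, hj],
    s ≫ w, by rw [Category.assoc, hwq, hs]⟩

end PreJCat

theorem join_weakLifting_general (P : PreJCat C)
    (hc : ∀ Xo : C, P.CofModel Xo)
    {A Cc B A' Cc' B' : C}
    (f : A ⟶ B) (g : Cc ⟶ B) (f' : A' ⟶ B') (g' : Cc' ⟶ B') (b : B ⟶ B')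
    {Xf : C} (τf : A' ⟶ Xf) (qf : Xf ⟶ B') (x : A ⟶ Xf)
    (hτf : P.weq τf) (hff : τf ≫ qf = f') (hx : x ≫ qf = f ≫ b)
    {Xg : C} (τg : Cc' ⟶ Xg) (qg : Xg ⟶ B') (y : Cc ⟶ Xg)
    (hτg : P.weq τg) (hgg : τg ≫ qg = g') (hy : y ≫ qg = g ≫ b)
    {J₁ J₂ : C} (j : J₁ ⟶ B) (j' : J₂ ⟶ B')
    (hj : P.IsJoin f g j) (hj' : P.IsJoin f' g' j') :
    P.WeakLifting (j ≫ b) j' ∧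
      (P.weq b → P.weq x → P.weq y → P.WeaklyEquivObj J₁ J₂) := by
  obtain ⟨E, τ, q, hτ, hq, hτq, E', Z, fbar, pbar, i, σ, a, bz,
    hE', hi, hσ, hiσ, hJ, haj, hbzj⟩ := hj
  obtain ⟨E₂, τ₂, q₂, hτ₂, hq₂, hτq₂, E₂', Z₂, fbar₂, pbar₂, i₂, σ₂, a₂, bz₂,
    hE₂', hi₂, hσ₂, hiσ₂, hJ₂, haj₂, hbzj₂⟩ := hj'
  -- transport `y` to the F-factorization `E₂` of `g'`, then compare `E` with `E₂` over `b`
  obtain ⟨eg, heg, heg_weq⟩ := P.exists_lift_of_square (hc Xg) hτg hq₂ (hgg.trans hτq₂.symm)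
  obtain ⟨e, he, he_weq⟩ := P.exists_lift_of_square (hc E) hτ hq₂
    (show τ ≫ q ≫ b = (y ≫ eg) ≫ q₂ by rw [reassoc_of% hτq, Category.assoc, heg, hy])
  obtain ⟨F, wE, wX, hF, -⟩ := P.pb_exists q₂ qf hq₂
  let m : E₂' ⟶ F := hF.lift fbar₂ (pbar₂ ≫ τf) (by rw [hE₂'.w, Category.assoc, hff])
  let n : E' ⟶ F := hF.lift (fbar ≫ e) (pbar ≫ x)
    (by rw [Category.assoc, he, reassoc_of% hE'.w, Category.assoc, hx])
  have hm : P.weq m := P.weq_gluing_of_isPullback hE₂' hF hq₂ hq₂ (e := 𝟙 _) (b := 𝟙 _)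
    (by simp) (by simp [hff]) (P.weq_id _) (P.weq_id _) hτf (by simp [m]) (by simp [m])
  obtain ⟨K, ν, μ₁, μ₂, hμ₁, hμ₂, hμ₁w, hμ₂w⟩ := P.exists_common_weq_target hF.w
    (n₁ := n) (h₁ := σ ≫ e) (j₁ := j ≫ b) (n₂ := m) (h₂ := σ₂) (j₂ := j')
    hJ hi (hF.lift_snd _ _ _) (by simp [n, ← reassoc_of% hiσ]) (by simp [reassoc_of% haj, hx])
      (by simp [reassoc_of% hbzj, he])
    hJ₂ hi₂ (hF.lift_snd _ _ _) (by simp [m, hiσ₂]) (by simp [haj₂, hff]) hbzj₂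
  refine ⟨P.weakLifting_of_factor (hμ₂w hτf hm hσ₂) hμ₂ hμ₁, fun hbw hxw hyw => ?_⟩
  have hew : P.weq e := he_weq (P.weq_comp hyw (heg_weq hτ₂))
  have hnw : P.weq n := P.weq_gluing_of_isPullback hE' hF hq hq₂ he hx hew hbw hxw
    (hF.lift_fst _ _ _) (hF.lift_snd _ _ _)
  exact .trans _ _ _ (.rel _ _ ⟨μ₁, hμ₁w hxw hnw (P.weq_comp hσ hew)⟩)
    (.symm _ _ (.rel _ _ ⟨μ₂, hμ₂w hτf hm hσ₂⟩))

/-- In a category satisfying (J1)-(J4): if `b ∘ f` admits a weak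
lifting along `f'` via `x` and `b ∘ g` admits a weak lifting along `g'` via `y`,
then `b ∘ j` admits a weak lifting along `j'` for the join morphisms `j, j'`.
Moreover, if `b`, `x` and `y` are weak equivalences, the join objects are weakly
equivalent. -/
theorem join_weakLifting (P : PreJCat C)
    (hc : ∀ Xo : C, P.CofModel Xo)
    {A Cc B A' Cc' B' : C}
    (f : A ⟶ B) (g : Cc ⟶ B) (f' : A' ⟶ B') (g' : Cc' ⟶ B') (b : B ⟶ B')
    {Xf : C} (τf : A' ⟶ Xf) (qf : Xf ⟶ B') (x : A ⟶ Xf)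
    (hτf : P.weq τf) (hqf : P.fib qf) (hff : τf ≫ qf = f') (hx : x ≫ qf = f ≫ b)
    {Xg : C} (τg : Cc' ⟶ Xg) (qg : Xg ⟶ B') (y : Cc ⟶ Xg)
    (hτg : P.weq τg) (hqg : P.fib qg) (hgg : τg ≫ qg = g') (hy : y ≫ qg = g ≫ b)
    {J₁ J₂ : C} (j : J₁ ⟶ B) (j' : J₂ ⟶ B')
    (hj : P.IsJoin f g j) (hj' : P.IsJoin f' g' j') :
    P.WeakLifting (j ≫ b) j' ∧
      (P.weq b → P.weq x → P.weq y → P.WeaklyEquivObj J₁ J₂) :=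
  join_weakLifting_general P hc f g f' g' b τf qf x hτf hff hx τg qg y hτg hgg hy j j' hj hj'
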